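/- arXiv:1703.07857 — 6 statements merged into one kernel-verified Lean document; each statement's English description precedes it below -/
import Mathlib

section
/- Assume that 1 is an eigenvalue of a matrix S ∈ Sp(ℝ⁴) and that there exists a splitting of ℝ⁴ by S-invariant Lagrangian planes, i.e., two Lagrangian planes V and W with V ⊕ W = ℝ⁴, S(V) = V and S(W) = W. Then either S = I or dim ker(S − I) = 2. -/
open Matrix

/-- Index type for 4×4 matrices, split into two 2×2 blocks. -/
abbrev K4 := Fin 2 ⊕ Fin 2

/-- The standard symplectic matrix J = [[0, I₂], [−I₂, 0]]. -/
noncomputable def J4 : Matrix K4 K4 ℝ := Matrix.fromBlocks 0 1 (-1) 0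

/-- S belongs to the symplectic group Sp(ℝ⁴). -/
def IsSymplectic (S : Matrix K4 K4 ℝ) : Prop := Sᵀ * J4 * S = J4

/-- A Lagrangian plane: a two-dimensional subspace of ℝ⁴ on which the
symplectic form ω(ξ, η) = ξᵀ J η vanishes identically. -/
def IsLagrangian (V : Submodule ℝ (K4 → ℝ)) : Prop :=
  Module.finrank ℝ ↥V = 2 ∧ ∀ ξ ∈ V, ∀ η ∈ V, ξ ⬝ᵥ J4.mulVec η = 0

/-! Let `K = ker (S - 1)`. As `S` preserves `V` and `W`, `K = (K ⊓ V) ⊕ (K ⊓ W)`. The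
symplectic form identifies `W` with the dual of `V` (because `W` is Lagrangian and
complementary to `V`), and since `S` preserves the form, `(S - 1)|_W` becomes minus the
transpose of `(S - 1)|_V`, up to the isomorphism `S|_W`. So `(S - 1)|_V` and `(S - 1)|_W`
have kernels of the same dimension, whence `dim K = 2 dim (K ⊓ V) ∈ {2, 4}`; and
`dim K = 4` means `S = 1`. -/

open Module LinearMap

theorem LinearMap.ker_eq_inf_sup_inf_of_isCompl {R M : Type*} [Ring R] [AddCommGroup M]
    [Module R M] {V W : Submodule R M} {g : M →ₗ[R] M} (hVW : IsCompl V W)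
    (hgV : ∀ x ∈ V, g x ∈ V) (hgW : ∀ x ∈ W, g x ∈ W) : ker g = ker g ⊓ V ⊔ ker g ⊓ W := by
  refine le_antisymm (fun x hx => ?_) (sup_le inf_le_left inf_le_left)
  obtain ⟨v, hv, w, hw, rfl⟩ := Submodule.mem_sup.mp (hVW.sup_eq_top ▸ Submodule.mem_top (x := x))
  have hsum : g v + g w = 0 := by rwa [← map_add]
  have hgv : g v = 0 := by
    refine (Submodule.disjoint_def.mp hVW.disjoint) _ (hgV v hv) ?_
    rw [eq_neg_of_add_eq_zero_left hsum]
    exact W.neg_mem (hgW w hw)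
  rw [hgv, zero_add] at hsum
  exact Submodule.add_mem_sup ⟨hgv, hv⟩ ⟨hsum, hw⟩

section DivisionRing

variable {K E : Type*} [DivisionRing K] [AddCommGroup E] [Module K E] {g : E →ₗ[K] E}

theorem LinearMap.finrank_ker_restrict {p : Submodule K E} (hg : ∀ x ∈ p, g x ∈ p) :
    finrank K (ker (g.restrict hg)) = finrank K ↥(ker g ⊓ p) := by
  rw [ker_restrict, ← inf_comm, ← Submodule.map_comap_subtype]
  exact (Submodule.equivMapOfInjective _ p.injective_subtype _).finrank_eq

theorem LinearMap.finrank_ker_eq_add_of_isCompl [FiniteDimensional K E] {V W : Submodule K E}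
    (hVW : IsCompl V W) (hgV : ∀ x ∈ V, g x ∈ V) (hgW : ∀ x ∈ W, g x ∈ W) :
    finrank K (ker g) = finrank K ↥(ker g ⊓ V) + finrank K ↥(ker g ⊓ W) := by
  have h := Submodule.finrank_sup_add_finrank_inf_eq (ker g ⊓ V) (ker g ⊓ W)
  rwa [(hVW.disjoint.mono inf_le_right inf_le_right).eq_bot, finrank_bot, add_zero,
    ← ker_eq_inf_sup_inf_of_isCompl hVW hgV hgW] at h

end DivisionRing

namespace LinearMap.BilinForm

variable {k E : Type*} [Field k] [AddCommGroup E] [Module k E] {B : LinearMap.BilinForm k E}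
  {V W : Submodule k E}

theorem _root_.LinearMap.SeparatingRight.flip_domRestrict₁₂_injective (hB : B.SeparatingRight)
    (hW : ∀ x ∈ W, ∀ y ∈ W, B x y = 0) (hVW : V ⊔ W = ⊤) :
    Function.Injective (B.domRestrict₁₂ V W).flip := by
  rw [← ker_eq_bot, Submodule.eq_bot_iff]
  rintro w hw
  refine Subtype.ext (hB w fun x => ?_)
  obtain ⟨v, hv, w', hw', rfl⟩ := Submodule.mem_sup.mp (hVW ▸ Submodule.mem_top (x := x))
  have hvw : B v w = 0 := LinearMap.congr_fun hw ⟨v, hv⟩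
  rw [map_add, LinearMap.add_apply, hvw, hW w' hw' w w.2, add_zero]

variable [FiniteDimensional k E] {f : E →ₗ[k] E}

theorem finrank_ker_sub_one_inf_eq (hf : ∀ x y, B (f x) (f y) = B x y)
    (hfV : ∀ x ∈ V, f x ∈ V) (hfW : W.map f = W)
    (hP : Function.Bijective (B.domRestrict₁₂ V W).flip) :
    finrank k ↥(ker (f - 1) ⊓ V) = finrank k ↥(ker (f - 1) ⊓ W) := by
  set P := (B.domRestrict₁₂ V W).flip
  have hfW' : ∀ x ∈ W, f x ∈ W := fun x hx => hfW ▸ Submodule.mem_map_of_mem hx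
  set gV := (f - 1).restrict fun x hx => V.sub_mem (hfV x hx) hx
  set gW := (f - 1).restrict fun x hx => W.sub_mem (hfW' x hx) hx
  set fW := f.restrict hfW'
  have hfW_surj : Function.Surjective fW := by
    rintro ⟨w, hw⟩
    obtain ⟨x, hx, rfl⟩ := (hfW.symm ▸ hw : w ∈ W.map f)
    exact ⟨⟨x, hx⟩, rfl⟩
  -- pointwise, `B v ((f - 1) w) = -B ((f - 1) v) (f w)` because `B (f v) (f w) = B v w`
  have hkey : P ∘ₗ gW = -(gV.dualMap ∘ₗ (P ∘ₗ fW)) := by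
    ext w v
    simp [P, gV, gW, fW, domRestrict₁₂_apply, hf]
  have hrank : finrank k (range gW) = finrank k (range gV) := calc
      finrank k (range gW) = finrank k (range (P ∘ₗ gW)) := by
        rw [range_comp]; exact (Submodule.equivMapOfInjective _ hP.1 _).finrank_eq
    _ = finrank k (range gV.dualMap) := by
        rw [hkey, range_neg, range_comp_of_range_eq_top gV.dualMap
          (range_eq_top.mpr (hP.2.comp hfW_surj : Function.Surjective (P ∘ₗ fW)))]
    _ = finrank k (range gV) := finrank_range_dualMap_eq_finrank_range gV
  have hdim : finrank k V = finrank k W := by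
    rw [(LinearEquiv.ofBijective P hP).finrank_eq, Subspace.dual_finrank_eq]
  have hV := finrank_range_add_finrank_ker gV
  have hW := finrank_range_add_finrank_ker gW
  rw [finrank_ker_restrict] at hV hW
  omega

theorem finrank_ker_sub_one_eq_two_mul (hB : B.SeparatingRight)
    (hf : ∀ x y, B (f x) (f y) = B x y) (hVW : IsCompl V W)
    (hW : ∀ x ∈ W, ∀ y ∈ W, B x y = 0) (hdim : finrank k V = finrank k W)
    (hfV : V.map f = V) (hfW : W.map f = W) :
    finrank k ↥(ker (f - 1)) = 2 * finrank k ↥(ker (f - 1) ⊓ V) := by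
  have hinj := hB.flip_domRestrict₁₂_injective hW hVW.sup_eq_top
  have hP : Function.Bijective (B.domRestrict₁₂ V W).flip :=
    ⟨hinj, (injective_iff_surjective_of_finrank_eq_finrank
      (by rw [Subspace.dual_finrank_eq, hdim])).mp hinj⟩
  have hfV' : ∀ x ∈ V, f x ∈ V := fun x hx => hfV ▸ Submodule.mem_map_of_mem hx
  have hfW' : ∀ x ∈ W, f x ∈ W := fun x hx => hfW ▸ Submodule.mem_map_of_mem hx
  rw [finrank_ker_eq_add_of_isCompl hVW (fun x hx => V.sub_mem (hfV' x hx) hx)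
    (fun x hx => W.sub_mem (hfW' x hx) hx), ← finrank_ker_sub_one_inf_eq hf hfV' hfW hP, two_mul]

end LinearMap.BilinForm

theorem Matrix.eq_one_of_ker_mulVecLin_sub_one_eq_top {n R : Type*} [Fintype n] [DecidableEq n]
    [CommRing R] {S : Matrix n n R} (h : ker (S - 1).mulVecLin = ⊤) : S = 1 :=
  sub_eq_zero.mp (toLin'.map_eq_zero_iff.mp ((toLin'_apply' _).trans (ker_eq_top.mp h)))

theorem J4_mul_J4 : J4 * J4 = -1 := by
  simp [J4, fromBlocks_multiply, ← fromBlocks_one, fromBlocks_neg]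

noncomputable abbrev symplecticForm : LinearMap.BilinForm ℝ (K4 → ℝ) := toLinearMap₂' ℝ J4

theorem separatingRight_symplecticForm : symplecticForm.SeparatingRight := by
  refine separatingRight_toLinearMap₂'_iff.mpr
    (separatingRight_iff_forall_mulVec_eq_zero.mpr fun v hv => ?_)
  simpa [mulVec_mulVec, J4_mul_J4, neg_mulVec] using congrArg (J4 *ᵥ ·) hv

theorem IsSymplectic.symplecticForm_mulVec {S : Matrix K4 K4 ℝ} (hS : IsSymplectic S)
    (x y : K4 → ℝ) : symplecticForm (S *ᵥ x) (S *ᵥ y) = symplecticForm x y := by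
  conv_rhs => rw [symplecticForm, ← hS, ← toLinearMap₂'_comp]
  rfl

theorem IsLagrangian.isotropic {V : Submodule ℝ (K4 → ℝ)} (hV : IsLagrangian V) :
    ∀ x ∈ V, ∀ y ∈ V, symplecticForm x y = 0 := by
  simpa only [toLinearMap₂'_apply'] using hV.2

theorem stmt1 (S : Matrix K4 K4 ℝ) (hS : IsSymplectic S)
    (h1 : Module.End.HasEigenvalue S.mulVecLin 1)
    (V W : Submodule ℝ (K4 → ℝ))
    (hV : IsLagrangian V) (hW : IsLagrangian W)
    (hsplit : IsCompl V W)
    (hSV : V.map S.mulVecLin = V) (hSW : W.map S.mulVecLin = W) :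
    S = 1 ∨ Module.finrank ℝ ↥(LinearMap.ker (S - 1).mulVecLin) = 2 := by
  have hK : ker (S - 1).mulVecLin = ker (S.mulVecLin - 1) := by
    rw [← toLin'_apply', map_sub, toLin'_one, toLin'_apply', Module.End.one_eq_id]
  set K := ker (S - 1).mulVecLin
  have hdouble : finrank ℝ K = 2 * finrank ℝ ↥(K ⊓ V) := by
    rw [hK]
    exact BilinForm.finrank_ker_sub_one_eq_two_mul separatingRight_symplecticForm
      hS.symplecticForm_mulVec hsplit hW.isotropic (hV.1.trans hW.1.symm) hSV hSW
  have hle : finrank ℝ ↥(K ⊓ V) ≤ 2 := (Submodule.finrank_mono inf_le_right).trans hV.1.le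
  have hne : finrank ℝ K ≠ 0 := by
    rwa [Ne, Submodule.finrank_eq_zero, hK, ← one_smul ℝ (1 : Module.End ℝ (K4 → ℝ)),
      ← Module.End.eigenspace_def]
  have htop : finrank ℝ (K4 → ℝ) = 4 := by simp
  obtain h | h : finrank ℝ K = 2 ∨ finrank ℝ K = finrank ℝ (K4 → ℝ) := by omega
  · exact Or.inr h
  · exact Or.inl (eq_one_of_ker_mulVecLin_sub_one_eq_top (Submodule.eq_top_of_finrank_eq h))
end

section
/- For ε ≠ 0 define the real 4×4 matrices Q_ε = [[A_ε, M], [0, A_ε⁻¹]] and B_ε = [[C_εᵀ, 0], [0, C_ε⁻¹]], where A_ε = diag(1, ε), M = diag(0, 1), and C_ε = [[1, ε], [−ε, 1]], and set S_ε = Q_ε B_ε Q_ε⁻¹. Also let P = [[βᵀ, 0], [0, β⁻¹]] with β = [[1, 0], [−1, 1]]. Then: (i) S_ε ∈ Sp(ℝ⁴); (ii) the spectrum of S_ε equals {1 + iε, 1 − iε, (1 + iε)⁻¹, (1 − iε)⁻¹}, so S_ε is not elliptic; (iii) det(S_ε − I) > 0 and tr S_ε < 4; (iv) S_ε → P as ε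 → 0; and (v) P ∈ Sp(ℝ⁴), P ≠ I, σ(P) = {1}, and dim ker(P − I) = 2. In particular, the equivalence between ellipticity and the conditions det(S − I) > 0, tr S < 4 fails in every neighborhood of P. -/
/-!
`S_ε` is the conjugate of the block-diagonal symplectic matrix `B_ε` by the symplectic matrix
`Q_ε`, so it is symplectic and shares characteristic polynomial, trace and `det (· - 1)` with
`B_ε`. These come from the `2 × 2` block `C_ε`, which is `√(1 + ε²)` times a rotation: its
eigenvalues `1 ± iε` have modulus `√(1 + ε²) ≠ 1`, and those of `C_ε⁻¹` are their inverses.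
The conjugating matrix `Q_ε` blows up as `ε → 0`, but `S_ε` itself has a closed form, rational
in `ε` without pole at `0`, whose value at `0` is `P`.
-/

open Matrix

/-- S is elliptic: every complex eigenvalue μ satisfies |μ| = 1 and μ ≠ ±1. -/
def IsElliptic (S : Matrix K4 K4 ℝ) : Prop :=
  ∀ μ ∈ spectrum ℂ (S.map Complex.ofReal), ‖μ‖ = 1 ∧ μ ≠ 1 ∧ μ ≠ -1

/-- A_ε = diag(1, ε). -/
noncomputable def Aeps (ε : ℝ) : Matrix (Fin 2) (Fin 2) ℝ := !![1, 0; 0, ε]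

/-- M = diag(0, 1). -/
noncomputable def Mblk : Matrix (Fin 2) (Fin 2) ℝ := !![0, 0; 0, 1]

/-- C_ε = [[1, ε], [−ε, 1]]. -/
noncomputable def Ceps (ε : ℝ) : Matrix (Fin 2) (Fin 2) ℝ := !![1, ε; -ε, 1]

/-- Q_ε = [[A_ε, M], [0, A_ε⁻¹]]. -/
noncomputable def Qeps (ε : ℝ) : Matrix K4 K4 ℝ :=
  Matrix.fromBlocks (Aeps ε) Mblk 0 (Aeps ε)⁻¹

/-- B_ε = [[C_εᵀ, 0], [0, C_ε⁻¹]]. -/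
noncomputable def Beps (ε : ℝ) : Matrix K4 K4 ℝ :=
  Matrix.fromBlocks (Ceps ε)ᵀ 0 0 (Ceps ε)⁻¹

/-- S_ε = Q_ε B_ε Q_ε⁻¹. -/
noncomputable def Seps (ε : ℝ) : Matrix K4 K4 ℝ := Qeps ε * Beps ε * (Qeps ε)⁻¹

/-- β = [[1, 0], [−1, 1]]. -/
noncomputable def bmat : Matrix (Fin 2) (Fin 2) ℝ := !![1, 0; -1, 1]

/-- P = [[βᵀ, 0], [0, β⁻¹]]. -/
noncomputable def Pmat : Matrix K4 K4 ℝ := Matrix.fromBlocks bmatᵀ 0 0 bmat⁻¹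


open Polynomial Complex ComplexConjugate

namespace SymplecticGroup

variable {l R : Type*} [DecidableEq l] [Fintype l] [CommRing R]

theorem nonsing_inv_mem {A : Matrix (l ⊕ l) (l ⊕ l) R} (hA : A ∈ symplecticGroup l R) :
    A⁻¹ ∈ symplecticGroup l R :=
  coe_inv' ⟨A, hA⟩ ▸ (⟨A, hA⟩⁻¹ : symplecticGroup l R).2

theorem fromBlocks_transpose_nonsing_inv_mem {X : Matrix l l R} (hX : IsUnit X.det) :
    fromBlocks Xᵀ 0 0 X⁻¹ ∈ symplecticGroup l R := by
  simp [fromBlocks_mem_iff, mul_nonsing_inv X hX]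

end SymplecticGroup

theorem isSymplectic_iff_mem_symplecticGroup (S : Matrix K4 K4 ℝ) :
    IsSymplectic S ↔ S ∈ symplecticGroup (Fin 2) ℝ := by
  have hJ : J4 = -J (Fin 2) ℝ := by
    rw [J4, J, fromBlocks_neg, neg_zero, neg_neg]
  rw [IsSymplectic, SymplecticGroup.mem_iff', hJ, Matrix.mul_neg, Matrix.neg_mul, neg_inj]

namespace Matrix

variable {m n R : Type*} [Fintype m] [Fintype n]

theorem charpoly_conj [DecidableEq n] [CommRing R] {M : Matrix n n R} (h : IsUnit M)
    (N : Matrix n n R) : (M * N * M⁻¹).charpoly = N.charpoly := by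
  rw [← h.unit_spec, charpoly_units_conj]

theorem det_sub_one_eq_eval_charpoly [DecidableEq n] [CommRing R] (S : Matrix n n R) :
    (S - 1).det = (-1) ^ Fintype.card n * S.charpoly.eval 1 := by
  rw [eval_charpoly, scalar_apply, diagonal_one, ← det_neg, neg_sub]

theorem trace_fromBlocks [AddCommMonoid R] (A : Matrix m m R) (B : Matrix m n R)
    (C : Matrix n m R) (D : Matrix n n R) : (fromBlocks A B C D).trace = A.trace + D.trace := by
  simp [trace, Fintype.sum_sum_type]

theorem mem_spectrum_map_ofReal_iff [DecidableEq n] (S : Matrix n n ℝ) (μ : ℂ) :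
    μ ∈ spectrum ℂ (S.map ofReal) ↔ (S.charpoly.map ofRealHom).IsRoot μ := by
  rw [mem_spectrum_iff_isRoot_charpoly, ← charpoly_map]
  rfl

theorem charpoly_fin_two_map_ofRealHom {X : Matrix (Fin 2) (Fin 2) ℝ} {z : ℂ}
    (htr : X.trace = 2 * z.re) (hdet : X.det = normSq z) :
    X.charpoly.map ofRealHom = (Polynomial.X - C z) * (Polynomial.X - C (conj z)) := by
  have h₁ : (X.trace : ℂ) = z + conj z := by rw [htr, add_conj]
  have h₂ : (X.det : ℂ) = z * conj z := by rw [hdet, mul_conj]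
  rw [charpoly_fin_two]
  simp only [Polynomial.map_add, Polynomial.map_sub, Polynomial.map_mul, Polynomial.map_pow,
    map_X, map_C, ofRealHom_eq_coe, h₁, h₂, C_add, C_mul]
  ring

end Matrix

theorem normSq_one_add_mul_I (ε : ℝ) : normSq (1 + ε * I) = 1 + ε ^ 2 := by
  simp [normSq_apply, sq]

theorem det_Ceps (ε : ℝ) : (Ceps ε).det = 1 + ε ^ 2 := by
  rw [Ceps, det_fin_two_of]
  ring

theorem trace_Ceps (ε : ℝ) : (Ceps ε).trace = 2 := by
  rw [Ceps, trace_fin_two_of]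
  norm_num

theorem Ceps_mul_transpose (ε : ℝ) : Ceps ε * (Ceps ε)ᵀ = (1 + ε ^ 2) • 1 := by
  ext i j
  fin_cases i <;> fin_cases j <;> simp [Ceps, mul_apply, Fin.sum_univ_two] <;> ring

theorem Ceps_inv (ε : ℝ) : (Ceps ε)⁻¹ = (1 + ε ^ 2)⁻¹ • (Ceps ε)ᵀ := by
  refine inv_eq_right_inv ?_
  rw [Matrix.mul_smul, Ceps_mul_transpose, smul_smul, inv_mul_cancel₀ (by positivity), one_smul]

theorem Aeps_inv {ε : ℝ} (hε : ε ≠ 0) : (Aeps ε)⁻¹ = !![1, 0; 0, ε⁻¹] := by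
  refine inv_eq_right_inv ?_
  rw [Aeps, mul_fin_two, one_fin_two]
  simp [hε]

theorem Qeps_mem_symplecticGroup {ε : ℝ} (hε : ε ≠ 0) :
    Qeps ε ∈ symplecticGroup (Fin 2) ℝ := by
  rw [Qeps, SymplecticGroup.fromBlocks_mem_iff, Aeps_inv hε]
  refine ⟨by simp, ?_, ?_⟩ <;>
  · ext i j
    fin_cases i <;> fin_cases j <;> simp [Aeps, Mblk, mul_apply, Fin.sum_univ_two, hε]

theorem Beps_mem_symplecticGroup (ε : ℝ) : Beps ε ∈ symplecticGroup (Fin 2) ℝ := by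
  refine SymplecticGroup.fromBlocks_transpose_nonsing_inv_mem ?_
  rw [det_Ceps]
  exact isUnit_iff_ne_zero.2 (by positivity)

theorem isUnit_Qeps {ε : ℝ} (hε : ε ≠ 0) : IsUnit (Qeps ε) :=
  (isUnit_iff_isUnit_det _).2 (SymplecticGroup.symplectic_det (Qeps_mem_symplecticGroup hε))

theorem isSymplectic_Seps {ε : ℝ} (hε : ε ≠ 0) : IsSymplectic (Seps ε) := by
  have hQ := Qeps_mem_symplecticGroup hε
  rw [isSymplectic_iff_mem_symplecticGroup, Seps]
  exact mul_mem (mul_mem hQ (Beps_mem_symplecticGroup ε)) (SymplecticGroup.nonsing_inv_mem hQ)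

theorem charpoly_Seps {ε : ℝ} (hε : ε ≠ 0) :
    (Seps ε).charpoly = (Ceps ε).charpoly * ((1 + ε ^ 2)⁻¹ • (Ceps ε)ᵀ).charpoly := by
  rw [Seps, charpoly_conj (isUnit_Qeps hε), Beps, charpoly_fromBlocks_zero₂₁, charpoly_transpose,
    Ceps_inv]

theorem charpoly_Seps_map_ofRealHom {ε : ℝ} (hε : ε ≠ 0) :
    (Seps ε).charpoly.map ofRealHom =
      (Polynomial.X - C (1 + ε * I)) * (Polynomial.X - C (1 - ε * I)) *
        ((Polynomial.X - C (1 + ε * I)⁻¹) * (Polynomial.X - C (1 - ε * I)⁻¹)) := by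
  have hconj : conj (1 + ε * I) = 1 - ε * I := by simp [sub_eq_add_neg]
  rw [charpoly_Seps hε, Polynomial.map_mul,
    charpoly_fin_two_map_ofRealHom (z := 1 + ε * I) (by simp [trace_Ceps])
      (by rw [det_Ceps, normSq_one_add_mul_I]),
    charpoly_fin_two_map_ofRealHom (z := (1 + ε * I)⁻¹), map_inv₀ (starRingEnd ℂ), hconj]
  · rw [trace_smul, trace_transpose, trace_Ceps, smul_eq_mul, inv_re, normSq_one_add_mul_I]
    simp [div_eq_inv_mul, mul_comm]
  · rw [det_smul, det_transpose, det_Ceps, map_inv₀, normSq_one_add_mul_I, Fintype.card_fin]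
    field_simp

theorem spectrum_Seps {ε : ℝ} (hε : ε ≠ 0) :
    spectrum ℂ ((Seps ε).map ofReal) =
      {1 + (ε : ℂ) * I, 1 - (ε : ℂ) * I, (1 + (ε : ℂ) * I)⁻¹, (1 - (ε : ℂ) * I)⁻¹} := by
  ext μ
  simp only [mem_spectrum_map_ofReal_iff, charpoly_Seps_map_ofRealHom hε, IsRoot.def, eval_mul,
    eval_sub, eval_X, eval_C, mul_eq_zero, sub_eq_zero, Set.mem_insert_iff,
    Set.mem_singleton_iff, or_assoc]

theorem not_isElliptic_Seps {ε : ℝ} (hε : ε ≠ 0) : ¬ IsElliptic (Seps ε) := by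
  intro h
  have hnorm := (h _ (by rw [spectrum_Seps hε]; exact Set.mem_insert _ _)).1
  have : normSq (1 + ε * I) = 1 := by rw [← Complex.sq_norm, hnorm, one_pow]
  rw [normSq_one_add_mul_I] at this
  exact hε (pow_eq_zero_iff two_ne_zero |>.1 (by linarith))

theorem det_Seps_sub_one {ε : ℝ} (hε : ε ≠ 0) : (Seps ε - 1).det = ε ^ 4 / (1 + ε ^ 2) := by
  rw [det_sub_one_eq_eval_charpoly, charpoly_Seps hε, eval_mul, charpoly_fin_two,
    charpoly_fin_two]
  simp only [Fintype.card_sum, Fintype.card_fin, eval_add, eval_sub, eval_pow, eval_mul, eval_X,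
    eval_C, trace_smul, trace_transpose, det_smul_of_tower, det_transpose, trace_Ceps,
    det_Ceps, smul_eq_mul]
  field_simp
  ring

theorem trace_Seps {ε : ℝ} (hε : ε ≠ 0) : (Seps ε).trace = 2 + 2 / (1 + ε ^ 2) := by
  rw [Seps, trace_conj (isUnit_Qeps hε), Beps, trace_fromBlocks, trace_transpose, Ceps_inv,
    trace_smul, trace_transpose, trace_Ceps, smul_eq_mul, div_eq_inv_mul]

noncomputable def SepsClosedForm (ε : ℝ) : Matrix K4 K4 ℝ :=
  fromBlocks !![1, -1; ε ^ 2, 1] !![0, ε; ε / (1 + ε ^ 2), -ε ^ 3 / (1 + ε ^ 2)] 0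
    ((1 + ε ^ 2)⁻¹ • !![1, -ε ^ 2; 1, 1])

theorem Qeps_inv {ε : ℝ} (hε : ε ≠ 0) :
    (Qeps ε)⁻¹ = fromBlocks !![1, 0; 0, ε⁻¹] (-Mblk) 0 (Aeps ε) := by
  refine inv_eq_right_inv ?_
  rw [Qeps, Aeps_inv hε, fromBlocks_multiply, ← fromBlocks_one]
  congr 1 <;>
  · ext i j
    fin_cases i <;> fin_cases j <;> simp [Aeps, Mblk, hε]

theorem Seps_eq_closedForm {ε : ℝ} (hε : ε ≠ 0) : Seps ε = SepsClosedForm ε := by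
  rw [Seps, Beps, Qeps_inv hε, Qeps, Aeps_inv hε, Ceps_inv, fromBlocks_multiply,
    fromBlocks_multiply, SepsClosedForm]
  congr 1 <;>
  · ext i j
    fin_cases i <;> fin_cases j <;>
      simp [Aeps, Mblk, Ceps, mul_apply, Fin.sum_univ_two, smul_vecMul, vecMul, dotProduct, hε,
        -mul_eq_mul_left_iff] <;>
      field_simp <;> ring

theorem continuous_SepsClosedForm : Continuous SepsClosedForm := by
  unfold SepsClosedForm
  refine Continuous.matrix_fromBlocks ?_ ?_ continuous_const ?_ <;>
    fun_prop (disch := intro x; positivity)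

theorem bmat_inv : bmat⁻¹ = !![1, 0; 1, 1] := by
  refine inv_eq_right_inv ?_
  rw [bmat, mul_fin_two, one_fin_two]
  norm_num

theorem SepsClosedForm_zero : SepsClosedForm 0 = Pmat := by
  rw [SepsClosedForm, Pmat, bmat_inv]
  congr 1 <;>
  · ext i j
    fin_cases i <;> fin_cases j <;> simp [bmat]

theorem tendsto_Seps : Filter.Tendsto Seps (nhdsWithin 0 {0}ᶜ) (nhds Pmat) := by
  have hlim := (continuous_SepsClosedForm.tendsto 0).mono_left (nhdsWithin_le_nhds (s := {0}ᶜ))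
  rw [SepsClosedForm_zero] at hlim
  refine hlim.congr' ?_
  filter_upwards [self_mem_nhdsWithin] with ε hε
  exact (Seps_eq_closedForm hε).symm

theorem det_bmat : bmat.det = 1 := by
  rw [bmat, det_fin_two_of]
  norm_num

theorem isSymplectic_Pmat : IsSymplectic Pmat := by
  rw [isSymplectic_iff_mem_symplecticGroup]
  exact SymplecticGroup.fromBlocks_transpose_nonsing_inv_mem (by rw [det_bmat]; exact isUnit_one)

theorem Pmat_ne_one : Pmat ≠ 1 := by
  intro h
  simpa [Pmat, bmat] using congr_fun₂ h (Sum.inl 0) (Sum.inl 1)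

theorem spectrum_Pmat : spectrum ℂ (Pmat.map ofReal) = {1} := by
  have hβ : bmat.charpoly.map ofRealHom = (Polynomial.X - C 1) * (Polynomial.X - C (conj 1)) :=
    charpoly_fin_two_map_ofRealHom (by simp [bmat, trace_fin_two_of]; norm_num)
      (by simp [det_bmat])
  have hβinv : bmat⁻¹.charpoly.map ofRealHom =
      (Polynomial.X - C 1) * (Polynomial.X - C (conj 1)) :=
    charpoly_fin_two_map_ofRealHom (by rw [bmat_inv, trace_fin_two_of]; norm_num)
      (by rw [bmat_inv, det_fin_two_of]; simp)
  ext μ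
  simp [mem_spectrum_map_ofReal_iff, Pmat, charpoly_transpose, hβ, hβinv, sub_eq_zero]

theorem Pmat_sub_one_mulVec_eq_zero_iff (x : K4 → ℝ) :
    (Pmat - 1) *ᵥ x = 0 ↔ x (Sum.inl 1) = 0 ∧ x (Sum.inr 0) = 0 := by
  rw [Pmat, bmat_inv]
  simp [bmat, funext_iff, mulVec, dotProduct, Fintype.sum_sum_type, one_apply]

theorem finrank_ker_Pmat_sub_one :
    Module.finrank ℝ (LinearMap.ker (Pmat - 1).mulVecLin) = 2 := by
  let f : (K4 → ℝ) →ₗ[ℝ] ℝ × ℝ := (LinearMap.proj (Sum.inl 1)).prod (LinearMap.proj (Sum.inr 0))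
  have hker : LinearMap.ker (Pmat - 1).mulVecLin = LinearMap.ker f := by
    ext x
    rw [LinearMap.mem_ker, mulVecLin_apply, Pmat_sub_one_mulVec_eq_zero_iff]
    simp [f]
  have hf : Function.Surjective f := fun ⟨a, b⟩ => ⟨Sum.elim ![0, a] ![b, 0], rfl⟩
  have hrank := f.finrank_range_add_finrank_ker
  rw [LinearMap.range_eq_top.2 hf, finrank_top, ← hker] at hrank
  simp only [Module.finrank_prod, Module.finrank_self, Module.finrank_fintype_fun_eq_card,
    Fintype.card_sum, Fintype.card_fin] at hrank
  omega

theorem stmt7 :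
    (∀ ε : ℝ, ε ≠ 0 →
      -- (i)
      IsSymplectic (Seps ε) ∧
      -- (ii)
      spectrum ℂ ((Seps ε).map Complex.ofReal) =
        {1 + (ε : ℂ) * Complex.I, 1 - (ε : ℂ) * Complex.I,
          (1 + (ε : ℂ) * Complex.I)⁻¹, (1 - (ε : ℂ) * Complex.I)⁻¹} ∧
      ¬ IsElliptic (Seps ε) ∧
      -- (iii)
      0 < (Seps ε - 1).det ∧ (Seps ε).trace < 4) ∧
    -- (iv)
    Filter.Tendsto Seps (nhdsWithin 0 {0}ᶜ) (nhds Pmat) ∧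
    -- (v)
    IsSymplectic Pmat ∧ Pmat ≠ 1 ∧ spectrum ℂ (Pmat.map Complex.ofReal) = {1} ∧
    Module.finrank ℝ ↥(LinearMap.ker (Pmat - 1).mulVecLin) = 2 := by
  refine ⟨fun ε hε => ⟨isSymplectic_Seps hε, spectrum_Seps hε, not_isElliptic_Seps hε, ?_, ?_⟩,
    tendsto_Seps, isSymplectic_Pmat, Pmat_ne_one, spectrum_Pmat, finrank_ker_Pmat_sub_one⟩
  · rw [det_Seps_sub_one hε]
    positivity
  · have hd : 1 < 1 + ε ^ 2 := lt_add_of_pos_right 1 (by positivity)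
    rw [trace_Seps hε]
    linarith [div_lt_self two_pos hd]
end

section
/- Let S be a real matrix of even size 2m × 2m such that every complex eigenvalue μ of S satisfies |μ| = 1 and μ ≠ 1. Then det(S − I) > 0. -/
/-!
Over `ℝ` the even dimension gives `det (S - 1) = χ_S(1)`. The characteristic polynomial `χ_S` is
monic, hence positive for large arguments, and a real root `r ≥ 1` would be a real eigenvalue
with `|r| = 1`, i.e. `r = 1`, which is excluded. So `χ_S` has no zero on `[1, ∞)` and, by the
intermediate value theorem, `χ_S(1) > 0`.
-/

open Matrix Polynomial Filter

lemma Polynomial.Monic.eval_pos_of_forall_le_eval_ne_zero {p : ℝ[X]} (hp : p.Monic) {a : ℝ}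
    (h : ∀ x, a ≤ x → p.eval x ≠ 0) : 0 < p.eval a := by
  rcases Nat.eq_zero_or_pos p.natDegree with hdeg | hdeg
  · simp [hp.natDegree_eq_zero.mp hdeg]
  have htend : Tendsto (fun x => p.eval x) atTop atTop :=
    p.tendsto_atTop_of_leadingCoeff_nonneg (natDegree_pos_iff_degree_pos.mp hdeg)
      (by simp [hp.leadingCoeff])
  obtain ⟨T, hTpos, haT⟩ := ((htend.eventually_gt_atTop 0).and (eventually_ge_atTop a)).exists
  by_contra! hle
  obtain ⟨x, ⟨hax, -⟩, hx⟩ :=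
    intermediate_value_Icc haT p.continuous.continuousOn ⟨hle, hTpos.le⟩
  exact h x hax hx

lemma Matrix.det_sub_one_eq_eval_charpoly_s10 {n R : Type*} [Fintype n] [DecidableEq n] [CommRing R]
    (M : Matrix n n R) (hn : Even (Fintype.card n)) : (M - 1).det = M.charpoly.eval 1 := by
  rw [eval_charpoly, scalar_apply, diagonal_one, ← neg_sub, det_neg, hn.neg_one_pow, one_mul]

lemma Matrix.map_mem_spectrum_map_of_isRoot_charpoly {n R S : Type*} [Fintype n] [DecidableEq n]
    [CommRing R] [CommRing S] [Nontrivial S] (M : Matrix n n R) (f : R →+* S) {r : R}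
    (hr : M.charpoly.IsRoot r) : f r ∈ spectrum S (M.map f) := by
  apply mem_spectrum_of_isRoot_charpoly
  rw [charpoly_map]
  exact hr.map

theorem stmt10 (m : ℕ) (S : Matrix (Fin (2 * m)) (Fin (2 * m)) ℝ)
    (h : ∀ μ ∈ spectrum ℂ (S.map Complex.ofReal), ‖μ‖ = 1 ∧ μ ≠ 1) :
    0 < (S - 1).det := by
  rw [S.det_sub_one_eq_eval_charpoly_s10 (by simp)]
  refine S.charpoly_monic.eval_pos_of_forall_le_eval_ne_zero fun x hx hroot => ?_
  obtain ⟨hnorm, hne⟩ := h _ (S.map_mem_spectrum_map_of_isRoot_charpoly Complex.ofRealHom hroot)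
  rw [Complex.ofRealHom_eq_coe, Complex.norm_real, Real.norm_of_nonneg (by linarith)] at hnorm
  exact hne (by simp [hnorm])
end

section
/- Let N be a nonzero integer and let Σ_N = {(x, y) ∈ (ℝ² \ {0}) × ℝ² : ½|y|² − 1/|x| = −½ N^{2/3} and N(x₁y₂ − x₂y₁) > 0}. Then Σ_N is a three-dimensional manifold diffeomorphic to S¹ × 𝔻, where 𝔻 is the open unit disk in ℝ²; in particular Σ_N is homeomorphic to S¹ × 𝔻. -/
/-- The set Σ_N of initial conditions producing 2π-periodic Kepler orbits with
winding number N. -/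
def SigmaN (N : ℤ) : Set (EuclideanSpace ℝ (Fin 2) × EuclideanSpace ℝ (Fin 2)) :=
  {p | p.1 ≠ 0 ∧
    (1 : ℝ) / 2 * ‖p.2‖ ^ 2 - 1 / ‖p.1‖ = -(1 : ℝ) / 2 * (|N| : ℝ) ^ ((2 : ℝ) / 3) ∧
    0 < (N : ℝ) * (p.1 0 * p.2 1 - p.1 1 * p.2 0)}

/-!
Identify the plane with `ℂ`, write a position `z ≠ 0` as `‖z‖ u` with `u` on the unit circle and
let `c = conj u * w` be the velocity seen in the frame rotating with `u`. Then `‖c‖ = ‖w‖`, so the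
energy equation at level `h < 0` gives `‖z‖ = (‖c‖² / 2 - h)⁻¹`, and the angular momentum
`(conj z * w).im = ‖z‖ * c.im` has the sign of `c.im`. Hence `(z, w) ↦ (u, c)` identifies `Σ_N`
with `S¹ × H`, where `H` is an open half-plane, and `H ≃ₜ ℂ ≃ₜ 𝔻`.
-/

open Complex ComplexConjugate

noncomputable def Circle.ofNeZero (z : ℂ) (hz : z ≠ 0) : Circle :=
  ⟨z / ‖z‖, mem_sphere_zero_iff_norm.mpr (by simp [hz])⟩

@[simp]
lemma Circle.coe_ofNeZero {z : ℂ} (hz : z ≠ 0) : (Circle.ofNeZero z hz : ℂ) = z / ‖z‖ := rfl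

lemma Circle.conj_mul_self (u : Circle) : conj (u : ℂ) * u = 1 := by
  simp [conj_mul', Circle.norm_coe]

lemma conj_mul_eq_norm_mul_conj_ofNeZero_mul {z : ℂ} (hz : z ≠ 0) (w : ℂ) :
    conj z * w = ‖z‖ * (conj (Circle.ofNeZero z hz : ℂ) * w) := by
  have : (‖z‖ : ℂ) ≠ 0 := by simpa using hz
  simp only [Circle.coe_ofNeZero, map_div₀, conj_ofReal]
  field_simp

noncomputable def halfPlaneHomeomorphComplex {t : ℝ} (ht : t ≠ 0) :
    {c : ℂ // 0 < t * c.im} ≃ₜ ℂ where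
  toFun c := c.1.re + Real.log (t * c.1.im) * I
  invFun z := ⟨z.re + (Real.exp z.im / t : ℝ) * I, by
    simp only [add_im, ofReal_im, mul_im, ofReal_re, I_im, I_re]
    field_simp
    simp [Real.exp_pos]⟩
  left_inv c := by
    apply Subtype.ext
    apply Complex.ext <;> simp [Real.exp_log c.2, ht]
  right_inv z := by
    apply Complex.ext <;> simp [mul_div_cancel₀ _ ht, -ofReal_exp]
  continuous_toFun := by
    have : ∀ c : {c : ℂ // 0 < t * c.im}, t * c.1.im ≠ 0 := fun c => c.2.ne'
    fun_prop (disch := exact this)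
  continuous_invFun := by fun_prop

/-- `Σ_N` in complex coordinates: energy `h`, and angular momentum
`(conj z * w).im = z.re * w.im - z.im * w.re` of the sign of `t`. -/
def keplerLevelSet (h t : ℝ) : Set (ℂ × ℂ) :=
  {p | p.1 ≠ 0 ∧ 1 / 2 * ‖p.2‖ ^ 2 - 1 / ‖p.1‖ = h ∧ 0 < t * (conj p.1 * p.2).im}

noncomputable def keplerRadius (h : ℝ) (c : ℂ) : ℝ := (1 / 2 * ‖c‖ ^ 2 - h)⁻¹

section KeplerLevelSet

variable {h t : ℝ}

lemma keplerRadius_pos (hh : h < 0) (c : ℂ) : 0 < keplerRadius h c := by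
  have := sq_nonneg ‖c‖
  exact inv_pos.mpr (by linarith)

lemma continuous_keplerRadius (hh : h < 0) : Continuous (keplerRadius h) :=
  (by fun_prop : Continuous fun c : ℂ => 1 / 2 * ‖c‖ ^ 2 - h).inv₀
    fun c => (inv_pos.mp (keplerRadius_pos hh c)).ne'

lemma norm_fst_eq_keplerRadius {p : ℂ × ℂ} (hp : p ∈ keplerLevelSet h t) :
    ‖p.1‖ = keplerRadius h p.2 := by
  obtain ⟨hz, hE, -⟩ := hp
  have : ‖p.1‖ ≠ 0 := norm_ne_zero_iff.mpr hz
  rw [keplerRadius, ← hE]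
  field_simp
  ring

lemma keplerRadius_mul_mem_keplerLevelSet (hh : h < 0) (u : Circle) {c : ℂ}
    (hc : 0 < t * c.im) : (keplerRadius h c * (u : ℂ), c * u) ∈ keplerLevelSet h t := by
  have hr := keplerRadius_pos hh c
  have hnorm : ‖(keplerRadius h c : ℂ) * u‖ = keplerRadius h c := by
    simp [Circle.norm_coe, hr.le]
  have hconj : conj ((keplerRadius h c : ℂ) * u) * (c * u) = keplerRadius h c * c := by
    rw [map_mul, conj_ofReal]
    linear_combination (keplerRadius h c * c : ℂ) * u.conj_mul_self
  refine ⟨by simpa [hnorm] using hr.ne', ?_, ?_⟩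
  · rw [hnorm, norm_mul, Circle.norm_coe, mul_one, keplerRadius, div_inv_eq_mul]
    ring
  · rw [hconj, im_ofReal_mul, mul_left_comm]
    exact mul_pos hr hc

noncomputable def keplerLevelSetHomeomorphCircleProd (hh : h < 0) :
    keplerLevelSet h t ≃ₜ Circle × {c : ℂ // 0 < t * c.im} where
  toFun p := (Circle.ofNeZero p.1.1 p.2.1, ⟨conj (Circle.ofNeZero p.1.1 p.2.1 : ℂ) * p.1.2, by
    have := p.2.2.2
    rw [conj_mul_eq_norm_mul_conj_ofNeZero_mul p.2.1, im_ofReal_mul, mul_left_comm] at this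
    exact pos_of_mul_pos_right this (norm_nonneg _)⟩)
  invFun q := ⟨_, keplerRadius_mul_mem_keplerLevelSet hh q.1 q.2.2⟩
  left_inv p := by
    obtain ⟨⟨z, w⟩, hp⟩ := p
    set u := Circle.ofNeZero z hp.1
    have hr : keplerRadius h (conj (u : ℂ) * w) = ‖z‖ := by
      rw [norm_fst_eq_keplerRadius hp]
      simp [keplerRadius, Circle.norm_coe]
    ext1
    refine Prod.ext ?_ ?_
    · show (keplerRadius h (conj (u : ℂ) * w) : ℂ) * u = z
      have hz : (‖z‖ : ℂ) ≠ 0 := by simpa using hp.1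
      rw [hr, Circle.coe_ofNeZero]
      field_simp
    · show conj (u : ℂ) * w * u = w
      linear_combination w * u.conj_mul_self
  right_inv q := by
    obtain ⟨u, c, hc⟩ := q
    have hr := keplerRadius_pos hh c
    have hu : Circle.ofNeZero ((keplerRadius h c : ℂ) * u)
        (keplerRadius_mul_mem_keplerLevelSet hh u hc).1 = u := by
      apply Circle.ext
      have : (keplerRadius h c : ℂ) ≠ 0 := by exact_mod_cast hr.ne'
      simp only [Circle.coe_ofNeZero, Complex.norm_mul, norm_real, Real.norm_eq_abs,
        abs_of_pos hr, Circle.norm_coe, mul_one]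
      field_simp
    ext1
    · exact hu
    · ext1
      show conj (Circle.ofNeZero _ _ : ℂ) * (c * u) = c
      rw [hu]
      linear_combination c * u.conj_mul_self
  continuous_toFun := by
    have hnorm : ∀ p : keplerLevelSet h t, ((‖p.1.1‖ : ℝ) : ℂ) ≠ 0 := fun p => by
      simpa using p.2.1
    have hu : Continuous fun p : keplerLevelSet h t => Circle.ofNeZero p.1.1 p.2.1 :=
      Continuous.subtype_mk (by fun_prop (disch := exact hnorm)) _
    exact hu.prodMk (Continuous.subtype_mk
      ((continuous_conj.comp (continuous_subtype_val.comp hu)).mul (by fun_prop)) _)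
  continuous_invFun := by
    have := continuous_keplerRadius hh
    exact Continuous.subtype_mk (by fun_prop) _

end KeplerLevelSet

noncomputable def keplerLevelSetHomeomorphSigmaN (N : ℤ) :
    keplerLevelSet (-(1 : ℝ) / 2 * (|N| : ℝ) ^ ((2 : ℝ) / 3)) N ≃ₜ SigmaN N :=
  let e := Complex.orthonormalBasisOneI.repr.toHomeomorph
  (e.prodCongr e).subtype fun p => by
    simp [keplerLevelSet, SigmaN, e, sub_eq_add_neg]

theorem stmt13 (N : ℤ) (hN : N ≠ 0) :
    Nonempty
      (↥(SigmaN N) ≃ₜ (Circle × {q : EuclideanSpace ℝ (Fin 2) // ‖q‖ < 1})) := by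
  have hN' : (N : ℝ) ≠ 0 := Int.cast_ne_zero.mpr hN
  have hh : -(1 : ℝ) / 2 * (|N| : ℝ) ^ ((2 : ℝ) / 3) < 0 := by
    have := Real.rpow_pos_of_pos (abs_pos.mpr hN') ((2 : ℝ) / 3)
    linarith
  have hdisk : ℂ ≃ₜ {q : EuclideanSpace ℝ (Fin 2) // ‖q‖ < 1} :=
    Complex.orthonormalBasisOneI.repr.toHomeomorph.trans <| Homeomorph.unitBall.trans <|
      (Homeomorph.refl _).subtype fun _ => mem_ball_zero_iff
  exact ⟨(keplerLevelSetHomeomorphSigmaN N).symm.trans <|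
    (keplerLevelSetHomeomorphCircleProd hh).trans <|
      (Homeomorph.refl Circle).prodCongr <| (halfPlaneHomeomorphComplex hN').trans hdisk⟩
end

section
/- For every e with 0 ≤ e < 1, the map u ↦ u − e sin u is a strictly increasing real-analytic bijection of ℝ onto ℝ. Consequently, for every (e, l) ∈ (−1, 1) × ℝ, Kepler's equation u − e sin u = l has a unique solution u = u(e, l), and the function (e, l) ↦ u(e, l) is real analytic on (−1, 1) × ℝ. -/
/-!
For `|e| < 1` the derivative `1 - e cos u` of `u ↦ u - e sin u` is positive, and the map stays
within `|e|` of the identity, so it is a strictly increasing bijection of `ℝ`. The solution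
`u(e, l)` is then the second component of the inverse of `(e, v) ↦ (e, v - e sin v)`. This map is
analytic with invertible derivative, so the analytic inverse function theorem provides an analytic
local inverse, and injectivity on `(-1, 1) × ℝ` forces it to agree with `(e, l) ↦ (e, u(e, l))`.
-/

open Real Filter Topology

section InverseFunction

variable {𝕜 : Type*} [NontriviallyNormedField 𝕜]
  {E : Type*} [NormedAddCommGroup E] [NormedSpace 𝕜 E] [CompleteSpace E]
  {F : Type*} [NormedAddCommGroup F] [NormedSpace 𝕜 F] [CompleteSpace F]

theorem analyticAt_of_rightInverse_of_injOn {f : E → F} {f' : E →L[𝕜] F} {g : F → E}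
    {U : Set E} {b : F} (hf : AnalyticAt 𝕜 f (g b)) (hf' : HasFDerivAt f f' (g b))
    (hbij : Function.Bijective f') (hinj : U.InjOn f) (hU : U ∈ 𝓝 (g b))
    (hg : ∀ᶠ y in 𝓝 b, f (g y) = y ∧ g y ∈ U) : AnalyticAt 𝕜 g b := by
  let i : E ≃L[𝕜] F := .ofBijective f' (LinearMap.ker_eq_bot.2 hbij.1)
    (LinearMap.range_eq_top.2 hbij.2)
  have hi : (i : E →L[𝕜] F) = fderiv 𝕜 f (g b) :=
    (ContinuousLinearEquiv.coe_ofBijective ..).trans hf'.fderiv.symm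
  have hstrict : HasStrictFDerivAt f (i : E →L[𝕜] F) (g b) := hi ▸ hf.hasStrictFDerivAt
  let φ := hstrict.toOpenPartialHomeomorph f
  have hsource : g b ∈ φ.source := hstrict.mem_toOpenPartialHomeomorph_source
  have hφb : φ (g b) = b := hg.self_of_nhds.1
  have hsymm : AnalyticAt 𝕜 φ.symm b := hφb ▸ φ.analyticAt_symm' hsource hf hi.symm
  have hφU : ∀ᶠ y in 𝓝 b, φ.symm y ∈ U := hφb ▸ φ.tendsto_symm hsource hU
  refine hsymm.congr ?_
  filter_upwards [hg, hφU, φ.open_target.mem_nhds (hφb ▸ φ.map_source hsource)]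
    with y ⟨hfy, hgy⟩ hφy hy
  exact hinj hφy hgy ((φ.right_inv hy).trans hfy.symm)

end InverseFunction

section Kepler

theorem one_sub_mul_cos_pos {e : ℝ} (he : |e| < 1) (v : ℝ) : 0 < 1 - e * cos v := by
  have : |e * cos v| < 1 := by
    rw [abs_mul]
    exact (mul_le_of_le_one_right (abs_nonneg e) (abs_cos_le_one v)).trans_lt he
  linarith [(abs_lt.1 this).2]

theorem kepler_hasDerivAt (e v : ℝ) :
    HasDerivAt (fun u : ℝ => u - e * sin u) (1 - e * cos v) v :=
  (hasDerivAt_id v).sub ((hasDerivAt_sin v).const_mul e)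

theorem kepler_strictMono {e : ℝ} (he : |e| < 1) : StrictMono (fun u : ℝ => u - e * sin u) :=
  strictMono_of_hasDerivAt_pos (kepler_hasDerivAt e) (one_sub_mul_cos_pos he)

theorem kepler_surjective (e : ℝ) : Function.Surjective (fun u : ℝ => u - e * sin u) := by
  have hclose : ∀ u : ℝ, |(u - e * sin u) - u| ≤ |e| := fun u => by
    simpa [abs_mul] using mul_le_mul_of_nonneg_left (abs_sin_le_one u) (abs_nonneg e)
  refine Continuous.surjective (by fun_prop) ?_ ?_
  · refine tendsto_atTop_mono (f := fun u => u - |e|) (fun u => ?_)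
      (tendsto_atTop_add_const_right _ _ tendsto_id)
    linarith [(abs_le.1 (hclose u)).1]
  · refine tendsto_atBot_mono (f := fun u => u + |e|) (fun u => ?_)
      (tendsto_atBot_add_const_right _ _ tendsto_id)
    linarith [(abs_le.1 (hclose u)).2]

theorem kepler_analyticAt (e x : ℝ) : AnalyticAt ℝ (fun u : ℝ => u - e * sin u) x := by
  fun_prop

noncomputable def keplerSolution (p : ℝ × ℝ) : ℝ :=
  Function.surjInv (kepler_surjective p.1) p.2

theorem keplerSolution_spec (p : ℝ × ℝ) :
    keplerSolution p - p.1 * sin (keplerSolution p) = p.2 :=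
  Function.surjInv_eq (kepler_surjective p.1) p.2

theorem eq_keplerSolution {p : ℝ × ℝ} (hp : |p.1| < 1) {w : ℝ} (hw : w - p.1 * sin w = p.2) :
    w = keplerSolution p :=
  (kepler_strictMono hp).injective (hw.trans (keplerSolution_spec p).symm)

noncomputable def keplerGraph (p : ℝ × ℝ) : ℝ × ℝ := (p.1, p.2 - p.1 * sin p.2)

theorem keplerGraph_analyticAt (p : ℝ × ℝ) : AnalyticAt ℝ keplerGraph p :=
  analyticAt_fst.prod
    (analyticAt_snd.sub (analyticAt_fst.mul (analyticAt_sin.comp analyticAt_snd)))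

noncomputable def shearScale (s c : ℝ) : ℝ × ℝ →L[ℝ] ℝ × ℝ :=
  (ContinuousLinearMap.fst ℝ ℝ ℝ).prod
    (c • ContinuousLinearMap.snd ℝ ℝ ℝ - s • ContinuousLinearMap.fst ℝ ℝ ℝ)

theorem shearScale_bijective (s : ℝ) {c : ℝ} (hc : c ≠ 0) :
    Function.Bijective (shearScale s c) := by
  refine Function.bijective_iff_has_inverse.2
    ⟨fun q => (q.1, (q.2 + s * q.1) / c), fun q => ?_, fun q => ?_⟩ <;>
  ext <;> simp [shearScale, mul_div_cancel_left₀ _ hc, mul_div_cancel₀ _ hc]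

theorem keplerGraph_hasFDerivAt (p : ℝ × ℝ) :
    HasFDerivAt keplerGraph (shearScale (sin p.2) (1 - p.1 * cos p.2)) p := by
  have hsin : HasFDerivAt (fun q : ℝ × ℝ => sin q.2)
      (cos p.2 • ContinuousLinearMap.snd ℝ ℝ ℝ) p :=
    (hasDerivAt_sin p.2).comp_hasFDerivAt p hasFDerivAt_snd
  refine hasFDerivAt_fst.prodMk
    ((hasFDerivAt_snd.sub (hasFDerivAt_fst.mul hsin)).congr_fderiv ?_)
  ext <;> simp

theorem keplerGraph_injOn : {p : ℝ × ℝ | |p.1| < 1}.InjOn keplerGraph := by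
  rintro ⟨e, v⟩ he ⟨e', v'⟩ - h
  obtain ⟨rfl, hv⟩ := Prod.ext_iff.1 h
  exact Prod.ext rfl ((kepler_strictMono he).injective hv)

theorem keplerSolution_analyticAt {p : ℝ × ℝ} (hp : |p.1| < 1) :
    AnalyticAt ℝ keplerSolution p := by
  have hU : IsOpen {q : ℝ × ℝ | |q.1| < 1} :=
    isOpen_lt (continuous_abs.comp continuous_fst) continuous_const
  have hgraph : AnalyticAt ℝ (fun q : ℝ × ℝ => (q.1, keplerSolution q)) p :=
    analyticAt_of_rightInverse_of_injOn (keplerGraph_analyticAt _) (keplerGraph_hasFDerivAt _)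
      (shearScale_bijective _ (one_sub_mul_cos_pos hp _).ne') keplerGraph_injOn
      (hU.mem_nhds hp) (eventually_of_mem (hU.mem_nhds hp) fun q hq => ⟨Prod.ext rfl (keplerSolution_spec q), hq⟩)
  exact analyticAt_snd.comp hgraph

end Kepler

theorem stmt15 :
    (∀ e : ℝ, 0 ≤ e → e < 1 →
      StrictMono (fun u : ℝ => u - e * Real.sin u) ∧
      Function.Bijective (fun u : ℝ => u - e * Real.sin u) ∧
      AnalyticOnNhd ℝ (fun u : ℝ => u - e * Real.sin u) Set.univ) ∧
    ∃ u : ℝ × ℝ → ℝ,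
      (∀ p : ℝ × ℝ, p.1 ∈ Set.Ioo (-1 : ℝ) 1 →
        u p - p.1 * Real.sin (u p) = p.2 ∧
        ∀ w : ℝ, w - p.1 * Real.sin w = p.2 → w = u p) ∧
      AnalyticOnNhd ℝ u (Set.Ioo (-1 : ℝ) 1 ×ˢ (Set.univ : Set ℝ)) := by
  refine ⟨fun e he0 he1 => ?_, keplerSolution,
    fun p hp => ⟨keplerSolution_spec p, fun w => eq_keplerSolution (abs_lt.2 hp)⟩,
    fun p hp => keplerSolution_analyticAt (abs_lt.2 hp.1)⟩
  have he : |e| < 1 := abs_lt.2 ⟨by linarith, he1⟩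
  exact ⟨kepler_strictMono he, ⟨(kepler_strictMono he).injective, kepler_surjective e⟩,
    fun x _ => kepler_analyticAt e x⟩
end

section
/- Fix Λ > 0 and λ, h ∈ ℝ. Define, for r in a neighborhood of 0, e(Λ, r) = r √(1/Λ − r²/(4Λ²)), let u = u(e(Λ, r), λ + h) be the solution of Kepler's equation u − e sin u = λ + h, and set x̃(λ, Λ, r, h) = Λ² R[−h] (cos u − e, √(1 − e²) sin u)ᵀ, where R[g] denotes the rotation matrix [[cos g, −sin g], [sin g, cos g]]. Then the first derivative of x̃ with respect to r at r = 0 is (∂x̃/∂r)(λ, Λ, 0, h) = ½ Λ^{3/2} R[−h] (−3 + cos 2(λ + h), sin 2(λ + h))ᵀ. -/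
/-!
Write `θ = λ + h`. Along `r ↦ (e(Λ, r), θ)` the eccentricity starts at `0` with speed
`Λ^{-1/2}`, so by implicit differentiation of Kepler's equation at `e = 0` the eccentric
anomaly `u` starts at `θ` with speed `Λ^{-1/2} sin θ`, while `√(1 - e²)` is stationary.
Differentiating `(cos u - e, √(1 - e²) sin u)` then gives
`-Λ^{-1/2} (1 + sin² θ, -sin θ cos θ) = ½ Λ^{-1/2} (-3 + cos 2θ, sin 2θ)`;
the factor `Λ²` and the rotation are linear.
-/

open Real

/-- The eccentricity in Poincaré-type radial coordinates:
e(Λ, r) = r √(1/Λ − r²/(4Λ²)). -/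
noncomputable def ecc (Λ r : ℝ) : ℝ := r * Real.sqrt (1 / Λ - r ^ 2 / (4 * Λ ^ 2))

theorem hasDerivAt_id_mul_of_continuousAt {g : ℝ → ℝ} (hg : ContinuousAt g 0) :
    HasDerivAt (fun r => r * g r) (g 0) 0 := by
  rw [hasDerivAt_iff_tendsto_slope_zero]
  refine (hg.tendsto.mono_left nhdsWithin_le_nhds).congr' ?_
  filter_upwards [self_mem_nhdsWithin] with t ht
  simp [inv_mul_cancel_left₀ (show t ≠ 0 from ht)]

@[simp]
theorem ecc_zero (Λ : ℝ) : ecc Λ 0 = 0 := by simp [ecc]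

theorem hasDerivAt_ecc_zero (Λ : ℝ) : HasDerivAt (ecc Λ) (√(1 / Λ)) 0 := by
  have : HasDerivAt (ecc Λ) (√(1 / Λ - 0 ^ 2 / (4 * Λ ^ 2))) 0 :=
    hasDerivAt_id_mul_of_continuousAt (by fun_prop)
  simpa using this

theorem rpow_three_halves_eq_sq_mul_sqrt_inv {Λ : ℝ} (hΛ : 0 < Λ) :
    Λ ^ ((3 : ℝ) / 2) = Λ ^ 2 * √(1 / Λ) := by
  rw [show (3 : ℝ) / 2 = 2 - 1 / 2 by norm_num, Real.rpow_sub hΛ, Real.rpow_two,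
    ← Real.sqrt_eq_rpow, one_div, Real.sqrt_inv, div_eq_mul_inv]

theorem HasDerivAt.sqrt_one_sub_sq {E : ℝ → ℝ} {E' x : ℝ} (hE : HasDerivAt E E' x)
    (hEx : E x = 0) : HasDerivAt (fun r => √(1 - E r ^ 2)) 0 x := by
  simpa [hEx] using ((hasDerivAt_const x 1).sub (hE.pow 2)).sqrt (by simp [hEx])

theorem kepler_solution_zero {u : ℝ × ℝ → ℝ}
    (hk : ∀ p : ℝ × ℝ, p.1 ∈ Set.Ioo (-1 : ℝ) 1 → u p - p.1 * Real.sin (u p) = p.2)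
    (l : ℝ) : u (0, l) = l := by
  simpa using hk (0, l) (by simp)

theorem hasDerivAt_kepler_solution_comp {u : ℝ × ℝ → ℝ} {l : ℝ}
    (hu : DifferentiableAt ℝ u (0, l))
    (hk : ∀ p : ℝ × ℝ, p.1 ∈ Set.Ioo (-1 : ℝ) 1 → u p - p.1 * Real.sin (u p) = p.2)
    {E : ℝ → ℝ} {E' x : ℝ} (hE : HasDerivAt E E' x) (hEx : E x = 0) :
    HasDerivAt (fun r => u (E r, l)) (E' * Real.sin l) x := by
  have hcurve : HasDerivAt (fun r => (E r, l)) (E', 0) x := hE.prodMk (hasDerivAt_const x l)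
  rw [← hEx] at hu
  obtain ⟨c, hφ⟩ : ∃ c, HasDerivAt (fun r => u (E r, l)) c x :=
    ⟨_, hu.hasFDerivAt.comp_hasDerivAt x hcurve⟩
  have hφx : u (E x, l) = l := by rw [hEx, kepler_solution_zero hk]
  have hkepler : (fun r => u (E r, l) - E r * Real.sin (u (E r, l))) =ᶠ[nhds x] fun _ => l := by
    have hmem : ∀ᶠ r in nhds x, E r ∈ Set.Ioo (-1 : ℝ) 1 :=
      hE.continuousAt.eventually_mem (isOpen_Ioo.mem_nhds (by simp [hEx]))
    filter_upwards [hmem] with r hr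
    exact hk (E r, l) hr
  have hzero := (hφ.sub (hE.mul hφ.sin)).congr_of_eventuallyEq hkepler.symm
    |>.unique (hasDerivAt_const x l)
  rw [hφx, hEx] at hzero
  exact (show c = E' * Real.sin l by linarith) ▸ hφ

theorem HasDerivAt.const_mul_rotation {X Y : ℝ → ℝ} {X' Y' x : ℝ} (a g : ℝ)
    (hX : HasDerivAt X X' x) (hY : HasDerivAt Y Y' x) :
    HasDerivAt (fun r => ((a * (Real.cos g * X r + Real.sin g * Y r),
        a * (-Real.sin g * X r + Real.cos g * Y r)) : ℝ × ℝ))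
      (a * (Real.cos g * X' + Real.sin g * Y'), a * (-Real.sin g * X' + Real.cos g * Y')) x :=
  ((((hX.const_mul _).add (hY.const_mul _)).const_mul a).prodMk
    (((hX.const_mul _).add (hY.const_mul _)).const_mul a))

theorem stmt17 (u : ℝ × ℝ → ℝ)
    (hu : AnalyticOnNhd ℝ u (Set.Ioo (-1 : ℝ) 1 ×ˢ (Set.univ : Set ℝ)))
    (hk : ∀ p : ℝ × ℝ, p.1 ∈ Set.Ioo (-1 : ℝ) 1 →
      u p - p.1 * Real.sin (u p) = p.2)
    (Λ lam h : ℝ) (hΛ : 0 < Λ) :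
    HasDerivAt
      (fun r : ℝ =>
        ((Λ ^ 2 * (Real.cos h * (Real.cos (u (ecc Λ r, lam + h)) - ecc Λ r) +
            Real.sin h * (Real.sqrt (1 - ecc Λ r ^ 2) * Real.sin (u (ecc Λ r, lam + h)))),
          Λ ^ 2 * (-Real.sin h * (Real.cos (u (ecc Λ r, lam + h)) - ecc Λ r) +
            Real.cos h * (Real.sqrt (1 - ecc Λ r ^ 2) * Real.sin (u (ecc Λ r, lam + h))))) :
          ℝ × ℝ))
      ((1 / 2 * Λ ^ ((3 : ℝ) / 2) * (Real.cos h * (-3 + Real.cos (2 * (lam + h))) +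
          Real.sin h * Real.sin (2 * (lam + h))),
        1 / 2 * Λ ^ ((3 : ℝ) / 2) * (-Real.sin h * (-3 + Real.cos (2 * (lam + h))) +
          Real.cos h * Real.sin (2 * (lam + h)))))
      0 := by
  set θ := lam + h
  have hE := hasDerivAt_ecc_zero Λ
  have hφ := hasDerivAt_kepler_solution_comp (hu (0, θ) (by simp)).differentiableAt hk hE
    (ecc_zero Λ)
  have hφ0 : u (ecc Λ 0, θ) = θ := by rw [ecc_zero, kepler_solution_zero hk]
  have hX : HasDerivAt (fun r => Real.cos (u (ecc Λ r, θ)) - ecc Λ r) _ 0 := hφ.cos.sub hE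
  have hY : HasDerivAt (fun r => √(1 - ecc Λ r ^ 2) * Real.sin (u (ecc Λ r, θ))) _ 0 :=
    (hE.sqrt_one_sub_sq (ecc_zero Λ)).mul hφ.sin
  rw [hφ0] at hX hY
  convert hX.const_mul_rotation (Λ ^ 2) h hY using 2 <;>
  · rw [rpow_three_halves_eq_sq_mul_sqrt_inv hΛ, Real.cos_two_mul, Real.cos_sq', Real.sin_two_mul,
      ecc_zero, zero_pow two_ne_zero, sub_zero, Real.sqrt_one]
    ring
end
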